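/- arXiv:1011.5484 — 4 statements merged into one kernel-verified Lean document; each statement's English description precedes it below -/
import Mathlib

section
/- Let A → A₀ be a surjection of commutative rings with nilpotent kernel, and let B be an A-algebra with B₀ = A₀ ⊗_A B. If B₀ is a finite type A₀-algebra, then B is a finite type A-algebra. -/
/-!
The map `B → (A ⧸ I) ⊗[A] B` is surjective with kernel `I • B`, so lifting finitely many
generators of the tensor product gives a finitely generated subalgebra `S ⊆ B` with
`S + I • B = B`. Substituting this equation into itself gives `S + Iⁿ • B = B` for every `n`,
and `I ^ k = 0` forces `S = B`.
-/

open TensorProduct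

namespace Submodule

variable {A M : Type*} [CommSemiring A] [AddCommMonoid M] [Module A M] {I : Ideal A}
  {N : Submodule A M}

theorem sup_pow_smul_top_eq_top (h : N ⊔ I • ⊤ = ⊤) (n : ℕ) : N ⊔ I ^ n • ⊤ = ⊤ := by
  induction n with
  | zero => rw [pow_zero, Ideal.one_eq_top, top_smul, sup_top_eq]
  | succ n ih =>
    symm
    calc ⊤ = N ⊔ I ^ n • (N ⊔ I • ⊤) := by rw [h, ih]
      _ = N ⊔ (I ^ n • N ⊔ I ^ (n + 1) • ⊤) := by rw [smul_sup, pow_succ, Submodule.mul_smul]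
      _ = N ⊔ I ^ (n + 1) • ⊤ := by
        rw [← sup_assoc, sup_eq_left.2 (smul_le_right (I := I ^ n) (N := N))]

theorem eq_top_of_sup_smul_top_eq_top {k : ℕ} (hI : I ^ k = ⊥) (h : N ⊔ I • ⊤ = ⊤) : N = ⊤ := by
  simpa [hI] using sup_pow_smul_top_eq_top h k

end Submodule

theorem Algebra.TensorProduct.ker_includeRight_quotient {A B : Type*} [CommRing A] [Ring B]
    [Algebra A B] (I : Ideal A) :
    LinearMap.ker (includeRight : B →ₐ[A] (A ⧸ I) ⊗[A] B).toLinearMap = I • ⊤ := by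
  have hcomp : (quotTensorEquivQuotSMul B I).toLinearMap ∘ₗ includeRight.toLinearMap =
      (I • ⊤ : Submodule A B).mkQ := by
    ext b
    simp
  rw [← LinearEquiv.ker_comp (quotTensorEquivQuotSMul B I), hcomp, Submodule.ker_mkQ]

theorem Algebra.FiniteType.of_surjective_of_ker_le_smul_top {A B C : Type*} [CommRing A]
    [Ring B] [Ring C] [Algebra A B] [Algebra A C] [hC : Algebra.FiniteType A C]
    {I : Ideal A} {k : ℕ} (hI : I ^ k = ⊥) (f : B →ₐ[A] C) (hf : Function.Surjective f)
    (hker : LinearMap.ker f.toLinearMap ≤ I • ⊤) : Algebra.FiniteType A B := by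
  classical
  obtain ⟨s, hs⟩ := hC.out
  obtain ⟨g, hg⟩ := hf.hasRightInverse
  set S := Algebra.adjoin A (s.image g : Set B)
  have hS : S.map f = ⊤ := by
    rw [AlgHom.map_adjoin, Finset.coe_image, ← Set.image_comp, hg.comp_eq_id, Set.image_id, hs]
  refine ⟨⟨s.image g, Algebra.toSubmodule_eq_top.1 ?_⟩⟩
  refine Submodule.eq_top_of_sup_smul_top_eq_top hI (Submodule.eq_top_iff'.2 fun b => ?_)
  obtain ⟨p, hp, hfp⟩ := Subalgebra.mem_map.1 (hS ▸ Algebra.mem_top : f b ∈ S.map f)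
  have hbp : b - p ∈ I • ⊤ := hker (by simp [hfp])
  rw [← add_sub_cancel p b]
  exact Submodule.add_mem_sup (S.mem_toSubmodule.2 hp) hbp

/-- Let `A → A₀ = A/I` be a surjection of commutative rings with
nilpotent kernel `I`, and let `B` be an `A`-algebra with `B₀ = A₀ ⊗_A B`.
If `B₀` is a finite type `A₀`-algebra, then `B` is a finite type `A`-algebra. -/
theorem finiteType_of_finiteType_tensor_quotient
    (A : Type*) [CommRing A] (I : Ideal A) (k : ℕ) (hI : I ^ k = ⊥)
    (B : Type*) [CommRing B] [Algebra A B]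
    (hB : Algebra.FiniteType (A ⧸ I) ((A ⧸ I) ⊗[A] B)) :
    Algebra.FiniteType A B := by
  have hAI : Algebra.FiniteType A (A ⧸ I) :=
    .of_surjective (Algebra.ofId A (A ⧸ I)) Ideal.Quotient.mk_surjective
  have : Algebra.FiniteType A ((A ⧸ I) ⊗[A] B) := .trans hAI hB
  have hsurj :
      Function.Surjective (Algebra.TensorProduct.includeRight : B →ₐ[A] (A ⧸ I) ⊗[A] B) :=
    Algebra.TensorProduct.includeRight_surjective B Ideal.Quotient.mk_surjective
  exact .of_surjective_of_ker_le_smul_top hI _ hsurj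
    (Algebra.TensorProduct.ker_includeRight_quotient I).le
end

section
/- Given ring homomorphisms A → B/J and B → B/J (the quotient map) where J is an ideal of B, the natural map A ⊗_{A ×_{B/J} B} B → B/J is an isomorphism; equivalently, the cocartesian square formed by the fiber product ring A ×_{B/J} B with its projections to A and B and the maps to B/J is also cartesian in the sense that A ⊗_{(A ×_{B/J} B)} B ≅ B/J. -/
/-! Write `R = A ×_{B/J} B`. The projection `R → A` is surjective (lift `f a` to `B`), so every
element of `A ⊗_R B` has the form `1 ⊗ b`. If `b ∈ J`, then `(0, b) ∈ R`, so
`1 ⊗ b = (0, b) • (1 ⊗ 1) = 0 ⊗ 1 = 0`; hence `b ↦ 1 ⊗ b` induces an inverse `B/J → A ⊗_R B`. -/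

open TensorProduct

section

variable (A B : Type*) [CommRing A] [CommRing B] (J : Ideal B) (f : A →+* B ⧸ J)

/-- The fiber product ring `R = A ×_{B/J} B`, realized as the subring of `A × B`
consisting of pairs with equal image in `B/J`. -/
noncomputable def fiberProd : Subring (A × B) :=
  RingHom.eqLocus (f.comp (RingHom.fst A B)) ((Ideal.Quotient.mk J).comp (RingHom.snd A B))

noncomputable instance : Algebra (fiberProd A B J f) A :=
  ((RingHom.fst A B).comp (fiberProd A B J f).subtype).toAlgebra

noncomputable instance : Algebra (fiberProd A B J f) B :=
  ((RingHom.snd A B).comp (fiberProd A B J f).subtype).toAlgebra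

noncomputable instance : Algebra (fiberProd A B J f) (B ⧸ J) :=
  (((Ideal.Quotient.mk J).comp (RingHom.snd A B)).comp (fiberProd A B J f).subtype).toAlgebra

/-- `f : A → B/J` as a map of `R = A ×_{B/J} B`-algebras. -/
noncomputable def fiberProdFst : A →ₐ[fiberProd A B J f] (B ⧸ J) :=
  { toRingHom := f, commutes' := fun r => r.2 }

/-- The quotient map `B → B/J` as a map of `R = A ×_{B/J} B`-algebras. -/
noncomputable def fiberProdSnd : B →ₐ[fiberProd A B J f] (B ⧸ J) :=
  { toRingHom := Ideal.Quotient.mk J, commutes' := fun _ => rfl }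

theorem Algebra.TensorProduct.one_tmul_algebraMap_eq_zero {R S T : Type*} [CommSemiring R]
    [Semiring S] [Semiring T] [Algebra R S] [Algebra R T] {r : R} (hr : algebraMap R S r = 0) :
    (1 : S) ⊗ₜ[R] algebraMap R T r = 0 := by
  rw [← Algebra.TensorProduct.algebraMap_apply', Algebra.TensorProduct.algebraMap_apply, hr,
    zero_tmul]

theorem fiberProd_algebraMap_fst_surjective :
    Function.Surjective (algebraMap (fiberProd A B J f) A) := fun a => by
  obtain ⟨b, hb⟩ := Ideal.Quotient.mk_surjective (f a)
  exact ⟨⟨(a, b), hb.symm⟩, rfl⟩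

theorem fiberProd_one_tmul_eq_zero {b : B} (hb : b ∈ J) :
    (1 : A) ⊗ₜ[fiberProd A B J f] b = 0 :=
  Algebra.TensorProduct.one_tmul_algebraMap_eq_zero
    (r := (⟨(0, b), (map_zero f).trans (Ideal.Quotient.eq_zero_iff_mem.2 hb).symm⟩ :
      fiberProd A B J f)) rfl

/-- For ring homomorphisms `A → B/J` and `B → B/J` (the quotient
map), with `R = A ×_{B/J} B` the fiber product ring, the natural map
`A ⊗_R B → B/J`, `a ⊗ b ↦ f(a) · (b mod J)`, is an isomorphism; i.e. the
cocartesian square given by the fiber product is also cartesian. -/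
theorem fiberProd_tensor_bijective :
    Function.Bijective
      (@Algebra.TensorProduct.lift _ _ _ _ _ _ _ _ _ _ _ _ _ _ _ _ _ (IsScalarTower.left _) (fiberProdFst A B J f) (fiberProdSnd A B J f)
        (fun _ _ => Commute.all _ _)) := by
  have one_tmul_surjective := Algebra.TensorProduct.includeRight_surjective B
    (fiberProd_algebraMap_fst_surjective A B J f)
  -- `lift_tmul` does not fire on the elaborated statement; the value on `1 ⊗ₜ b` is used by defeq.
  have lift_one_tmul (b : B) :
      fiberProdFst A B J f 1 * fiberProdSnd A B J f b = Ideal.Quotient.mk J b := by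
    simp [fiberProdFst, fiberProdSnd]
  refine ⟨(injective_iff_map_eq_zero _).2 fun x hx => ?_, fun y => ?_⟩
  · obtain ⟨b, rfl⟩ := one_tmul_surjective x
    exact fiberProd_one_tmul_eq_zero A B J f
      (Ideal.Quotient.eq_zero_iff_mem.1 ((lift_one_tmul b).symm.trans hx))
  · obtain ⟨b, rfl⟩ := Ideal.Quotient.mk_surjective y
    exact ⟨1 ⊗ₜ b, lift_one_tmul b⟩

end
end

section
/- Consider a commutative triangle of schemes f : X → Y, g : X → Z, h : Y → Z with h ∘ f = g, where f and g are quasi-compact, quasi-separated, surjective, universally closed, with geometrically connected fibers, and moreover f and g are Stein (i.e. O_Y → f_*O_X and O_Z → g_*O_X are isomorphisms). If h has discrete fibers, then h is an isomorphism. -/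
open AlgebraicGeometry CategoryTheory Limits

/-- A morphism of schemes has geometrically connected fibers if for every
algebraically closed field `K` and every morphism `Spec K → Y`, the base change
`X ×_Y Spec K` is a connected (topological) space. -/
def HasGeomConnectedFibers {X Y : AlgebraicGeometry.Scheme}
    (f : X ⟶ Y) : Prop :=
  ∀ (K : Type) (_ : Field K) (_ : IsAlgClosed K)
    (g : Spec (CommRingCat.of K) ⟶ Y), ConnectedSpace ↥(pullback f g)

/-- A morphism of schemes `f : X → Y` is Stein if the canonical map
`O_Y → f_* O_X` is an isomorphism, i.e. `O_Y(U) → O_X(f⁻¹ U)` is an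
isomorphism for every open `U ⊆ Y`. -/
def IsSteinMorphism {X Y : AlgebraicGeometry.Scheme} (f : X ⟶ Y) : Prop :=
  ∀ U : Y.Opens, IsIso (f.app U)

/-!
The fibres of `h` are the images under `f` of the fibres of `g`, which are connected (each is the
image of the geometric fibre over the algebraic closure of the residue field); being also
discrete, they are points, so `h` is injective. It is surjective because `g` is, and closed because
`g` is closed and `f` is a continuous surjection; hence `h` is a homeomorphism. Finally
`g.app U = h.app U ≫ f.app (h ⁻¹ U)` with `g.app U` and `f.app (h ⁻¹ U)` invertible, so every
`h.app U` is invertible.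
-/

theorem Function.Injective.of_isPreconnected_fibers_comp {X Y Z : Type*}
    [TopologicalSpace X] [TopologicalSpace Y] {f : X → Y} {h : Y → Z}
    (hf : Continuous f) (hf' : f.Surjective)
    (hconn : ∀ z, IsPreconnected ((h ∘ f) ⁻¹' {z}))
    (hdisc : ∀ z, DiscreteTopology {y // h y = z}) : h.Injective := by
  intro y₁ y₂ e
  have hfiber : IsPreconnected (h ⁻¹' {h y₂}) := by
    rw [← Set.image_preimage_eq (h ⁻¹' {h y₂}) hf', ← Set.preimage_comp]
    exact (hconn _).image f hf.continuousOn
  have : Subsingleton {y // h y = h y₂} :=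
    @PreconnectedSpace.trivial_of_discrete _ _ (Subtype.preconnectedSpace hfiber) (hdisc _)
  exact congrArg Subtype.val (Subsingleton.elim (⟨y₁, e⟩ : {y // h y = h y₂}) ⟨y₂, rfl⟩)

namespace HasGeomConnectedFibers

theorem isPreconnected_preimage_singleton {X Z : Scheme} {g : X ⟶ Z}
    (hg : HasGeomConnectedFibers g) (z : Z) :
    _root_.IsPreconnected (g.base ⁻¹' {z}) := by
  let K := AlgebraicClosure (Z.residueField z)
  let q : Spec (CommRingCat.of K) ⟶ Z :=
    Spec.map (CommRingCat.ofHom (algebraMap (Z.residueField z) K)) ≫ Z.fromSpecResidueField z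
  have hq : ∀ t, q.base t = z := fun t ↦ Scheme.fromSpecResidueField_apply z _
  have := hg K inferInstance inferInstance q
  have hrange : g.base ⁻¹' {z} = Set.range (pullback.fst g q).base := by
    ext x
    constructor
    · intro hx
      obtain ⟨w, hw, -⟩ := Scheme.Pullback.exists_preimage_pullback x
        (⊥ : PrimeSpectrum K) (by rw [hx, hq])
      exact ⟨w, hw⟩
    · rintro ⟨w, rfl⟩
      rw [Set.mem_preimage, ← Scheme.Hom.comp_apply, pullback.condition, Scheme.Hom.comp_apply,
        hq, Set.mem_singleton_iff]
  rw [hrange]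
  exact isPreconnected_range (pullback.fst g q).continuous

end HasGeomConnectedFibers

theorem IsSteinMorphism.of_comp {X Y Z : Scheme} {f : X ⟶ Y} {h : Y ⟶ Z}
    (hf : IsSteinMorphism f) (hfh : IsSteinMorphism (f ≫ h)) : IsSteinMorphism h := by
  intro U
  have hfU := hf (h ⁻¹ᵁ U)
  have : IsIso (h.app U ≫ f.app (h ⁻¹ᵁ U)) := Scheme.Hom.comp_app f h U ▸ hfh U
  exact IsIso.of_isIso_comp_right (h.app U) (f.app (h ⁻¹ᵁ U))

theorem AlgebraicGeometry.Scheme.Hom.isIso_of_isIso_base_of_isIso_app {X Y : Scheme}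
    (f : X ⟶ Y) [IsIso f.base] (hf : ∀ U, IsIso (f.app U)) : IsIso f := by
  have : IsIso f.toPshHom.c := NatIso.isIso_of_isIso_app _
  have : IsIso ((Scheme.forgetToLocallyRingedSpace ⋙ LocallyRingedSpace.forgetToSheafedSpace ⋙
      SheafedSpace.forgetToPresheafedSpace).map f) :=
    PresheafedSpace.isIso_of_components f.toPshHom
  exact isIso_of_reflects_iso f (Scheme.forgetToLocallyRingedSpace ⋙
    LocallyRingedSpace.forgetToSheafedSpace ⋙ SheafedSpace.forgetToPresheafedSpace)

theorem isIso_of_discreteFibers_of_stein_general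
    (X Y Z : AlgebraicGeometry.Scheme) (f : X ⟶ Y) (g : X ⟶ Z) (h : Y ⟶ Z)
    (hcomm : f ≫ h = g)
    [AlgebraicGeometry.Surjective f]
    (hfs : IsSteinMorphism f)
    [AlgebraicGeometry.Surjective g]
    [UniversallyClosed g] (hgc : HasGeomConnectedFibers g)
    (hgs : IsSteinMorphism g)
    (hdisc : ∀ z : Z, DiscreteTopology { y : Y // h.base y = z }) :
    IsIso h := by
  subst hcomm
  have hinj : Function.Injective h.base :=
    .of_isPreconnected_fibers_comp f.continuous f.surjective
      hgc.isPreconnected_preimage_singleton hdisc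
  have hsurj : Function.Surjective h.base := .of_comp (f ≫ h).surjective
  have hclosed : IsClosedMap h.base :=
    .of_comp_surjective f.surjective f.continuous (f ≫ h).isClosedMap
  have : IsIso h.base := TopCat.isIso_of_bijective_of_isClosedMap _ ⟨hinj, hsurj⟩ hclosed
  exact h.isIso_of_isIso_base_of_isIso_app (hfs.of_comp hgs)

/-- Given a commutative triangle of schemes `h ∘ f = g` with `f`
and `g` quasi-compact, quasi-separated, surjective, universally closed, Stein,
and with geometrically connected fibers, if `h : Y → Z` has discrete fibers
then `h` is an isomorphism. -/
theorem isIso_of_discreteFibers_of_stein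
    (X Y Z : AlgebraicGeometry.Scheme) (f : X ⟶ Y) (g : X ⟶ Z) (h : Y ⟶ Z)
    (hcomm : f ≫ h = g)
    [QuasiCompact f] [QuasiSeparated f] [AlgebraicGeometry.Surjective f]
    [UniversallyClosed f] (hfc : HasGeomConnectedFibers f)
    (hfs : IsSteinMorphism f)
    [QuasiCompact g] [QuasiSeparated g] [AlgebraicGeometry.Surjective g]
    [UniversallyClosed g] (hgc : HasGeomConnectedFibers g)
    (hgs : IsSteinMorphism g)
    (hdisc : ∀ z : Z, DiscreteTopology { y : Y // h.base y = z }) :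
    IsIso h :=
  isIso_of_discreteFibers_of_stein_general X Y Z f g h hcomm hfs hgc hgs hdisc
end

section
/- Let k be a field and let X be the affine line with doubled origin over k, with the two open charts j_s, j_t : 𝔸¹ → X. The morphism Spec k[[x]] → X ×_k Spec k[[x]] over Spec k[[x]] induced by the first chart via x ↦ x is not a closed immersion, even though its restriction over the closed point x = 0 is a closed immersion (the inclusion of one of the two origins). -/
open AlgebraicGeometry CategoryTheory Limits

noncomputable section

variable (k : Type) [Field k]

/-- The affine line `𝔸¹ = Spec k[y]`. -/
def AffLine : AlgebraicGeometry.Scheme := Spec (CommRingCat.of (Polynomial k))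

/-- The structure morphism `𝔸¹ → Spec k`. -/
def affLineStruct : AffLine k ⟶ Spec (CommRingCat.of k) :=
  Spec.map (CommRingCat.ofHom (algebraMap k (Polynomial k)))

/-- The punctured affine line `𝔸¹ ∖ {0} = Spec k[y]_y`, with its open immersion
into `𝔸¹`. -/
def puncturedLineIncl :
    Spec (CommRingCat.of (Localization.Away (Polynomial.X : Polynomial k))) ⟶ AffLine k :=
  Spec.map (CommRingCat.ofHom
    (algebraMap (Polynomial k) (Localization.Away (Polynomial.X : Polynomial k))))

/-- The morphism `Spec k[[x]] → 𝔸¹` given on rings by `y ↦ x`. -/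
def powerSeriesSection : Spec (CommRingCat.of (PowerSeries k)) ⟶ AffLine k :=
  Spec.map (CommRingCat.ofHom
    ((Polynomial.aeval (PowerSeries.X : PowerSeries k)).toRingHom))

/-- The inclusion of the origin `Spec k → 𝔸¹`, given on rings by `y ↦ 0`. -/
def originSection : Spec (CommRingCat.of k) ⟶ AffLine k :=
  Spec.map (CommRingCat.ofHom ((Polynomial.aeval (0 : k)).toRingHom))

/-!
Compare the graph `f` of `Spec k[[x]] → 𝔸¹ → X` through the chart `js` with the graph `h`
through `jt`. Both are sections of the projection to `Spec k[[x]]`, and they agree at the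
generic point, because there `x` is a unit and the two charts coincide on `𝔸¹ ∖ {0}`. If `f`
had closed image, `h` would map the closed point, a specialization of the generic point, into
that image; as both are sections, `f` and `h` would then agree at the closed point as well.
But there they pass through the two different origins, which no chart identifies.

Over `x = 0`, the origin of the chart `js` is a closed point of `X`: it is closed in its own chart
and does not lie in the other one.
-/

theorem Specializes.apply_eq_of_isClosed_range {α β : Type*} [TopologicalSpace α]
    [TopologicalSpace β] {π : β → α} {f g : α → β} (hf : Function.LeftInverse π f)
    (hg : Function.LeftInverse π g) (hrange : IsClosed (Set.range f)) (hgc : Continuous g)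
    {x y : α} (hxy : x ⤳ y) (hx : f x = g x) : f y = g y := by
  obtain ⟨z, hz⟩ : g y ∈ Set.range f :=
    hrange.closure_subset_iff.mpr (Set.singleton_subset_iff.mpr ⟨x, hx⟩)
      (specializes_iff_mem_closure.mp (hxy.map hgc))
  have hzy : z = y := by rw [← hf z, hz, hg y]
  rw [← hz, hzy]

theorem Topology.IsOpenEmbedding.isClosed_image_of_disjoint {α β : Type*} [TopologicalSpace α]
    [TopologicalSpace β] {j : α → β} (hj : IsOpenEmbedding j) {V : Set β} (hV : IsOpen V)
    (hcover : Set.range j ∪ V = Set.univ) {C : Set α} (hC : IsClosed C)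
    (hCV : Disjoint (j '' C) V) : IsClosed (j '' C) := by
  have hcompl : (j '' C)ᶜ = j '' Cᶜ ∪ V := by
    rw [Set.image_compl_eq_range_sdiff_image hj.injective]
    ext z
    have hz : z ∈ Set.range j ∪ V := hcover ▸ Set.mem_univ z
    have := @Set.disjoint_left.mp hCV z
    simp only [Set.mem_union, Set.mem_compl_iff, Set.mem_sdiff] at hz ⊢
    tauto
  rw [← isOpen_compl_iff, hcompl]
  exact (hj.isOpenMap _ hC.isOpen_compl).union hV

theorem leftInverse_pullbackSnd_lift_id {X Y S : Scheme} {f : X ⟶ S} {g : Y ⟶ S} (s : Y ⟶ X)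
    (w : s ≫ f = 𝟙 Y ≫ g) :
    Function.LeftInverse (pullback.snd f g) (pullback.lift s (𝟙 Y) w) := fun y => by
  rw [← Scheme.Hom.comp_apply, pullback.lift_snd]
  rfl

theorem X_mem_powerSeriesSection_closedPoint :
    Polynomial.X ∈ PrimeSpectrum.asIdeal (R := Polynomial k)
      (powerSeriesSection k (IsLocalRing.closedPoint (PowerSeries k))) := by
  change Polynomial.aeval PowerSeries.X Polynomial.X ∈ IsLocalRing.maximalIdeal (PowerSeries k)
  rw [Polynomial.aeval_X, IsLocalRing.mem_maximalIdeal, mem_nonunits_iff,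
    PowerSeries.isUnit_iff_constantCoeff, PowerSeries.constantCoeff_X]
  exact not_isUnit_zero

theorem apply_eq_of_isClosedImmersion_lift {S T Y Z : Scheme} {q : Y ⟶ Z} {r : S ⟶ Z}
    (a b : S ⟶ Y) (wa : a ≫ q = 𝟙 S ≫ r) (wb : b ≫ q = 𝟙 S ≫ r)
    [IsClosedImmersion (pullback.lift a (𝟙 S) wa)] (ι : T ⟶ S) (hι : ι ≫ a = ι ≫ b)
    {t : T} {s : S} (hts : ι t ⤳ s) : a s = b s := by
  have hgraphs : pullback.lift a (𝟙 S) wa s = pullback.lift b (𝟙 S) wb s := by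
    refine Specializes.apply_eq_of_isClosed_range (leftInverse_pullbackSnd_lift_id _ _)
      (leftInverse_pullbackSnd_lift_id _ _) (Scheme.Hom.isClosedEmbedding _).isClosed_range
      (Scheme.Hom.continuous _) hts ?_
    have hlifts : ι ≫ pullback.lift a (𝟙 S) wa = ι ≫ pullback.lift b (𝟙 S) wb :=
      pullback.hom_ext
        (by rw [Category.assoc, Category.assoc, pullback.lift_fst, pullback.lift_fst, hι])
        (by rw [Category.assoc, Category.assoc, pullback.lift_snd, pullback.lift_snd])
    simpa only [Scheme.Hom.comp_apply] using congrArg (fun m : T ⟶ _ => m t) hlifts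
  simpa only [← Scheme.Hom.comp_apply, pullback.lift_fst] using
    congrArg (pullback.fst q r) hgraphs

section DoubledOrigin

variable {k} {X : Scheme} {js jt : AffLine k ⟶ X}

theorem preimage_range_eq_basicOpen_X
    (hglue : IsPullback (puncturedLineIncl k) (puncturedLineIncl k) js jt) :
    js ⁻¹' Set.range jt = (PrimeSpectrum.basicOpen (Polynomial.X : Polynomial k) :
      Set (PrimeSpectrum (Polynomial k))) := by
  have hrange : js ⁻¹' Set.range jt = Set.range (puncturedLineIncl k) := by
    rw [← hglue.isoPullback_hom_fst, Scheme.Hom.comp_base, TopCat.coe_comp,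
      hglue.isoPullback.hom.surjective.range_comp, Scheme.Pullback.range_fst]
  exact hrange.trans (PrimeSpectrum.localization_away_comap_range _ _)

theorem comp_js_eq_comp_jt_of_isUnit_X
    (hglue : IsPullback (puncturedLineIncl k) (puncturedLineIncl k) js jt)
    {R : Type} [CommRing R] (φ : Polynomial k →+* R) (hX : IsUnit (φ Polynomial.X)) :
    Spec.map (CommRingCat.ofHom φ) ≫ js = Spec.map (CommRingCat.ofHom φ) ≫ jt := by
  have hfac : Spec.map (CommRingCat.ofHom φ) =
      Spec.map (CommRingCat.ofHom (IsLocalization.Away.lift Polynomial.X hX)) ≫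
        puncturedLineIncl k := by
    dsimp only [puncturedLineIncl, AffLine]
    rw [← Spec.map_comp, ← CommRingCat.ofHom_comp, IsLocalization.Away.lift_comp]
  rw [hfac]
  exact (Category.assoc _ _ _).trans ((whisker_eq _ hglue.w).trans (Category.assoc _ _ _).symm)

theorem not_isClosedImmersion_lift_powerSeriesSection {q : X ⟶ Spec (CommRingCat.of k)}
    (hqs : js ≫ q = affLineStruct k) (hqt : jt ≫ q = affLineStruct k)
    (hglue : IsPullback (puncturedLineIncl k) (puncturedLineIncl k) js jt)
    (w : (powerSeriesSection k ≫ js) ≫ q = 𝟙 _ ≫ powerSeriesSection k ≫ js ≫ q) :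
    ¬ IsClosedImmersion (pullback.lift (powerSeriesSection k ≫ js) (𝟙 _) w) := by
  intro hf
  have hgeneric := comp_js_eq_comp_jt_of_isUnit_X hglue
    ((algebraMap (PowerSeries k) (FractionRing (PowerSeries k))).comp
      (Polynomial.aeval PowerSeries.X).toRingHom) (by simp)
  rw [CommRingCat.ofHom_comp, Spec.map_comp] at hgeneric
  have hclosed := apply_eq_of_isClosedImmersion_lift (powerSeriesSection k ≫ js)
    (powerSeriesSection k ≫ jt) w (by rw [Category.id_comp, Category.assoc, hqt, hqs])
    (Spec.map (CommRingCat.ofHom (algebraMap (PowerSeries k) (FractionRing (PowerSeries k)))))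
    ((Category.assoc _ _ _).symm.trans (hgeneric.trans (Category.assoc _ _ _)))
    (t := default) (IsLocalRing.specializes_closedPoint _)
  exact (PrimeSpectrum.mem_basicOpen _ _).mp
    ((preimage_range_eq_basicOpen_X hglue).subset ⟨_, hclosed.symm⟩)
    (X_mem_powerSeriesSection_closedPoint k)

theorem isClosedImmersion_originSection_comp [IsOpenImmersion js] [IsOpenImmersion jt]
    (hglue : IsPullback (puncturedLineIncl k) (puncturedLineIncl k) js jt)
    (hcover : Set.range js.base ∪ Set.range jt.base = Set.univ) :
    IsClosedImmersion (originSection k ≫ js) := by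
  have : IsClosedImmersion (originSection k) :=
    IsClosedImmersion.spec_of_surjective _ fun a => ⟨Polynomial.C a, by simp⟩
  refine IsClosedImmersion.of_isPreimmersion _ ?_
  rw [Scheme.Hom.comp_base, TopCat.coe_comp, Set.range_comp]
  refine js.isOpenEmbedding.isClosed_image_of_disjoint jt.isOpenEmbedding.isOpen_range hcover
    (originSection k).isClosedEmbedding.isClosed_range ?_
  rw [Set.disjoint_image_left, Set.disjoint_left]
  rintro - ⟨p, rfl⟩ hp
  refine (PrimeSpectrum.mem_basicOpen _ _).mp ((preimage_range_eq_basicOpen_X hglue).subset hp) ?_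
  change Polynomial.aeval (0 : k) (Polynomial.X : Polynomial k) ∈ PrimeSpectrum.asIdeal (R := k) p
  rw [Polynomial.aeval_X]
  exact zero_mem _

end DoubledOrigin

theorem originSection_comp_affLineStruct : originSection k ≫ affLineStruct k = 𝟙 _ := by
  have hring : CommRingCat.ofHom (algebraMap k (Polynomial k)) ≫
      CommRingCat.ofHom (Polynomial.aeval (0 : k)).toRingHom = 𝟙 _ := by
    ext a
    simp
  dsimp only [originSection, affLineStruct, AffLine]
  rw [← Spec.map_comp, hring, Spec.map_id]

/-- Let `X` be the affine line with doubled origin over a field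
`k`: a scheme with two open charts `js, jt : 𝔸¹ → X` over `Spec k`, covering
`X`, whose intersection is `𝔸¹ ∖ {0}` glued by the identity (expressed as a
pullback square). The morphism `Spec k[[x]] → X ×_k Spec k[[x]]` over
`Spec k[[x]]`, induced via the first chart by `y ↦ x`, is not a closed
immersion; nevertheless its restriction over the closed point `x = 0` — the
corresponding morphism `Spec k → X ×_k Spec k` induced by the inclusion of one
of the two origins — is a closed immersion. -/
theorem doubledOrigin_not_closedImmersion
    (X : AlgebraicGeometry.Scheme)
    (js jt : AffLine k ⟶ X) [IsOpenImmersion js] [IsOpenImmersion jt]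
    (q : X ⟶ Spec (CommRingCat.of k))
    (hqs : js ≫ q = affLineStruct k) (hqt : jt ≫ q = affLineStruct k)
    (hglue : IsPullback (puncturedLineIncl k) (puncturedLineIncl k) js jt)
    (hcover : Set.range js.base ∪ Set.range jt.base = Set.univ) :
    ¬ IsClosedImmersion
        (pullback.lift (powerSeriesSection k ≫ js) (𝟙 _)
          (by simp) : Spec (CommRingCat.of (PowerSeries k)) ⟶
            pullback q (powerSeriesSection k ≫ js ≫ q)) ∧
      IsClosedImmersion
        (pullback.lift (originSection k ≫ js) (𝟙 _)
          (by simp) : Spec (CommRingCat.of k) ⟶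
            pullback q (originSection k ≫ js ≫ q)) := by
  refine ⟨not_isClosedImmersion_lift_powerSeriesSection hqs hqt hglue _, ?_⟩
  have : IsIso (originSection k ≫ js ≫ q) := by
    rw [hqs, originSection_comp_affLineStruct]
    infer_instance
  rw [← MorphismProperty.cancel_right_of_respectsIso @IsClosedImmersion _
    (pullback.fst q (originSection k ≫ js ≫ q)), pullback.lift_fst]
  exact isClosedImmersion_originSection_comp hglue hcover

end
end
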